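/- arXiv:2104.10755 — 5 statements merged into one kernel-verified Lean document; each statement's English description precedes it below -/
import Mathlib

section
/- Let n ≥ 2 be an integer and let S be a nonempty subset of {1, …, ⌊n/2⌋}. If the circulant graph Circ(n,S) is a nut graph, then n is even, P(ω^{n/2}) = 0, and P(ω^j) ≠ 0 for all j ∈ {0, 1, …, n−1} with j ≠ n/2. -/
open Finset Polynomial

/-- The circulant graph `Circ(n, S)` on the vertex set `Fin n` (identified with `ℤ/nℤ`):
distinct vertices `i` and `j` are adjacent iff `i - j ≡ ±s (mod n)` for some `s ∈ S`. -/
def circ (n : ℕ) (S : Finset ℕ) : SimpleGraph (Fin n) where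
  Adj i j := i ≠ j ∧ ∃ s ∈ S,
      ((i.val : ZMod n) - (j.val : ZMod n) = (s : ZMod n) ∨
        (j.val : ZMod n) - (i.val : ZMod n) = (s : ZMod n))
  symm := by
    refine ⟨?_⟩
    rintro i j ⟨hij, s, hs, h⟩
    exact ⟨hij.symm, s, hs, h.symm⟩
  loopless := by
    refine ⟨?_⟩
    rintro i ⟨h, -⟩
    exact h rfl

open Classical in
/-- The adjacency matrix (over `ℚ`) of a graph on `Fin n`. -/
noncomputable def adjMat {n : ℕ} (G : SimpleGraph (Fin n)) :
    Matrix (Fin n) (Fin n) ℚ :=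
  Matrix.of fun i j => if G.Adj i j then 1 else 0

/-- A graph on at least two vertices is a nut graph if the kernel of its rational
adjacency matrix is one-dimensional, spanned by a vector having no zero entries. -/
def IsNutGraph {n : ℕ} (G : SimpleGraph (Fin n)) : Prop :=
  2 ≤ n ∧ ∃ v : Fin n → ℚ, (∀ i, v i ≠ 0) ∧ (adjMat G).mulVec v = 0 ∧
    ∀ w : Fin n → ℚ, (adjMat G).mulVec w = 0 → ∃ c : ℚ, w = c • v

open Classical in
/-- The degree of a vertex of a graph on `Fin n`. -/
noncomputable def degOf {n : ℕ} (G : SimpleGraph (Fin n)) (v : Fin n) : ℕ :=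
  (Finset.univ.filter fun w => G.Adj v w).card

/-- A graph is `d`-regular if every vertex has degree `d`. -/
def IsRegularGraph {n : ℕ} (G : SimpleGraph (Fin n)) (d : ℕ) : Prop :=
  ∀ v, degOf G v = d

/-- The eigenvalue polynomial `P(y) = ∑_{k=1}^{n-1} a_k y^k`, where `a_k = 1` iff
`k ∈ S` or `n - k ∈ S`. -/
noncomputable def Pval (n : ℕ) (S : Finset ℕ) (y : ℂ) : ℂ :=
  ∑ k ∈ Finset.Ico 1 n, (if k ∈ S ∨ n - k ∈ S then (1 : ℂ) else 0) * y ^ k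

/-- `ω = e^{2πi/n}`. -/
noncomputable def omegaC (n : ℕ) : ℂ :=
  Complex.exp (2 * (Real.pi : ℂ) * Complex.I / (n : ℂ))

/-- The generator set `S_t = {1, …, 2t+1} \ {t}`. -/
def St (t : ℕ) : Finset ℕ := (Finset.Icc 1 (2 * t + 1)).erase t

/-- The polynomial `Q_t(y) = y^{4t+3} − y^{3t+2} + y^{3t+1} − y^{2t+2} + y^{2t+1}
− y^{t+2} + y^{t+1} − 1` over `ℤ`. -/
noncomputable def Qt (t : ℕ) : Polynomial ℤ :=
  X ^ (4 * t + 3) - X ^ (3 * t + 2) + X ^ (3 * t + 1) - X ^ (2 * t + 2)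
    + X ^ (2 * t + 1) - X ^ (t + 2) + X ^ (t + 1) - 1

/-!
For `z ^ n = 1` the vector `(z ^ k)ₖ` is an eigenvector of the adjacency matrix of `Circ(n, S)`
with eigenvalue `P(z)`; taking `z = ω ^ j` gives an eigenbasis (a Vandermonde matrix), so the
determinant is `∏ⱼ P(ω ^ j)` and a nut graph, being singular, has some `P(ω ^ j) = 0`.
For any such `j`, `(ω ^ (j k))ₖ` is a complex kernel vector. The rational kernel is spanned by a
vector `v` without zero entries, hence so is the complex one, and `ω ^ j = v₁ / v₀` is a rational
root of unity, i.e. `±1`. Now `ω ^ j = 1` would force `j = 0`, but `P(1) = |S ∪ (n - S)| > 0`;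
so `ω ^ j = -1`, which forces `n = 2 j`.
-/

open Matrix

theorem Matrix.mul_eq_mul_of_map_mulVec_eq_zero {ι F K : Type*} [Fintype ι] [Field F] [Field K]
    [Algebra F K] {A : Matrix ι ι F} {v : ι → F}
    (hv : ∀ w : ι → F, A *ᵥ w = 0 → ∃ c : F, w = c • v)
    {u : ι → K} (hu : A.map (algebraMap F K) *ᵥ u = 0) (k l : ι) :
    u k * algebraMap F K (v l) = u l * algebraMap F K (v k) := by
  -- The coordinates of `u` in an `F`-basis of `K` are kernel vectors of `A` over `F`.
  let b := Module.Basis.ofVectorSpace F K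
  have hcoord : ∀ β, ∃ c : F, (fun k => b.repr (u k) β) = c • v := fun β => by
    refine hv _ (funext fun i => ?_)
    have hi : ∑ k, A i k • u k = 0 := by
      simpa [mulVec, dotProduct, Algebra.smul_def] using congrFun hu i
    simpa [mulVec, dotProduct, map_sum, map_smul] using
      congrArg (fun x => b.repr x β) hi
  have hsmul : v l • u k = v k • u l := b.repr.injective <| Finsupp.ext fun β => by
    obtain ⟨c, hc⟩ := hcoord β
    simp only [map_smul, Finsupp.smul_apply, smul_eq_mul, congrFun hc k, congrFun hc l,
      Pi.smul_apply]
    ring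
  simpa only [Algebra.smul_def, mul_comm] using hsmul

theorem Matrix.det_eq_prod_of_mulVec_eq_smul {ι K : Type*} [Fintype ι] [DecidableEq ι] [Field K]
    {A V : Matrix ι ι K} (hV : V.det ≠ 0) {d : ι → K}
    (hAV : ∀ j, A *ᵥ (fun i => V i j) = d j • fun i => V i j) :
    A.det = ∏ j, d j := by
  have h : A * V = V * diagonal d := by
    ext i j
    rw [mul_apply, mul_diagonal]
    simpa [mulVec, dotProduct, mul_comm] using congrFun (hAV j) i
  have := congrArg det h
  rw [det_mul, det_mul, det_diagonal, mul_comm] at this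
  exact mul_left_cancel₀ hV this

theorem IsPrimitiveRoot.two_mul_eq_of_pow_eq_neg_one {R : Type*} [CommRing R] [Nontrivial R]
    (hR : ringChar R ≠ 2) {ζ : R} {n j : ℕ} (hζ : IsPrimitiveRoot ζ n) (hj : j < n)
    (hζj : ζ ^ j = -1) : 2 * j = n := by
  have hj0 : j ≠ 0 := by
    rintro rfl
    exact Ring.neg_one_ne_one_of_char_ne_two hR (hζj ▸ pow_zero ζ)
  obtain ⟨c, hc⟩ : n ∣ 2 * j := (hζ.pow_eq_one_iff_dvd _).mp <| by
    rw [mul_comm, pow_mul, hζj, neg_one_sq]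
  obtain _ | _ | c := c <;> first | omega | nlinarith

section Circulant

variable {n : ℕ} {S : Finset ℕ}

theorem circ_adj_add_iff (hS : S ⊆ Ioo 0 n) (i t : Fin n) :
    (circ n S).Adj i (i + t) ↔ (t : ℕ) ∈ S ∨ n - t ∈ S := by
  have : NeZero n := ⟨i.pos.ne'⟩
  have hcast : (((i + t : Fin n) : ℕ) : ZMod n) = (i : ℕ) + (t : ℕ) := by
    rw [Fin.val_add, ZMod.natCast_mod, Nat.cast_add]
  have ht : ((t : ℕ) : ZMod n).val = t := ZMod.val_cast_of_lt t.isLt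
  simp only [circ, hcast, sub_add_cancel_left, add_sub_cancel_left, ne_eq, left_eq_add]
  constructor
  · rintro ⟨-, s, hs, h | h⟩
    · obtain ⟨hs0, hsn⟩ := mem_Ioo.mp (hS hs)
      have hsval : ((s : ℕ) : ZMod n).val = s := ZMod.val_cast_of_lt hsn
      have : (t : ℕ) = n - s := by
        rw [← ht, ← neg_neg ((t : ℕ) : ZMod n), h, ZMod.neg_val, if_neg, hsval]
        rw [← ZMod.val_eq_zero, hsval]; omega
      right; rwa [this, Nat.sub_sub_self hsn.le]
    · left; rwa [← ht, h, ZMod.val_cast_of_lt (mem_Ioo.mp (hS hs)).2]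
  · rintro (h | h)
    · exact ⟨fun h0 => by simpa [h0] using (mem_Ioo.mp (hS h)).1, t, h, Or.inr rfl⟩
    · refine ⟨fun h0 => by simpa [h0] using (mem_Ioo.mp (hS h)).2, n - t, h, Or.inl ?_⟩
      rw [Nat.cast_sub t.isLt.le, ZMod.natCast_self, zero_sub]

theorem Pval_eq_sum_fin (hS : S ⊆ Ioo 0 n) (z : ℂ) :
    Pval n S z = ∑ t : Fin n, (if (t : ℕ) ∈ S ∨ n - t ∈ S then 1 else 0) * z ^ (t : ℕ) := by
  rw [Fin.sum_univ_eq_sum_range (fun k => (if k ∈ S ∨ n - k ∈ S then 1 else 0) * z ^ k), Pval]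
  refine sum_subset (fun k hk => mem_range.mpr (mem_Ico.mp hk).2) fun k hk hk' => ?_
  obtain rfl : k = 0 := by simp only [mem_range, mem_Ico] at hk hk'; omega
  have h0 : 0 ∉ S := fun h => by simpa using hS h
  have hn : n ∉ S := fun h => by simpa using hS h
  simp [h0, hn]

theorem adjMat_circ_mulVec_pow (hS : S ⊆ Ioo 0 n) {z : ℂ} (hz : z ^ n = 1) :
    (adjMat (circ n S)).map (algebraMap ℚ ℂ) *ᵥ (fun k : Fin n => z ^ (k : ℕ)) =
      Pval n S z • fun k : Fin n => z ^ (k : ℕ) := by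
  classical
  funext i
  have : NeZero n := ⟨i.pos.ne'⟩
  have hpow (t : Fin n) : z ^ ((i + t : Fin n) : ℕ) = z ^ (i : ℕ) * z ^ (t : ℕ) := by
    rw [Fin.val_add, ← pow_eq_pow_mod _ hz, pow_add]
  calc ∑ k, (adjMat (circ n S)).map (algebraMap ℚ ℂ) i k * z ^ (k : ℕ)
      = ∑ t, (adjMat (circ n S)).map (algebraMap ℚ ℂ) i (i + t) * z ^ ((i + t : Fin n) : ℕ) :=
        (Equiv.sum_comp (Equiv.addLeft i) _).symm
    _ = Pval n S z * z ^ (i : ℕ) := by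
        simp only [Pval_eq_sum_fin hS, sum_mul, map_apply, adjMat, of_apply, circ_adj_add_iff hS,
          hpow, apply_ite, map_one, map_zero]
        exact sum_congr rfl fun t _ => by ring

theorem det_adjMat_circ (hS : S ⊆ Ioo 0 n) (hn : n ≠ 0) :
    ((adjMat (circ n S)).map (algebraMap ℚ ℂ)).det =
      ∏ j : Fin n, Pval n S (omegaC n ^ (j : ℕ)) := by
  have hω : IsPrimitiveRoot (omegaC n) n := Complex.isPrimitiveRoot_exp n hn
  refine det_eq_prod_of_mulVec_eq_smul (V := (vandermonde fun j : Fin n => omegaC n ^ (j : ℕ))ᵀ)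
    ?_ fun j => ?_
  · rw [det_transpose, det_vandermonde_ne_zero_iff]
    exact fun i j h => Fin.ext (hω.pow_inj i.isLt j.isLt h)
  · have hz : (omegaC n ^ (j : ℕ)) ^ n = 1 := by rw [← pow_mul, pow_mul', hω.pow_eq_one, one_pow]
    simpa only [transpose_apply, vandermonde_apply] using adjMat_circ_mulVec_pow hS hz

theorem Pval_one_ne_zero (hS : S ⊆ Ioo 0 n) (hne : S.Nonempty) : Pval n S 1 ≠ 0 := by
  obtain ⟨s, hs⟩ := hne
  rw [Pval]
  simp only [one_pow, mul_one, sum_boole, Nat.cast_ne_zero, ← Nat.pos_iff_ne_zero, card_pos]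
  exact ⟨s, mem_filter.mpr ⟨mem_Ico.mpr (mem_Ioo.mp (hS hs)), Or.inl hs⟩⟩

end Circulant

theorem IsNutGraph.exists_eq_ratCast_of_mulVec_pow_eq_zero {n : ℕ} {G : SimpleGraph (Fin n)}
    (hG : IsNutGraph G) {z : ℂ}
    (hz : (adjMat G).map (algebraMap ℚ ℂ) *ᵥ (fun k : Fin n => z ^ (k : ℕ)) = 0) :
    ∃ q : ℚ, z = q := by
  obtain ⟨hn, v, hv0, -, hv⟩ := hG
  have h := mul_eq_mul_of_map_mulVec_eq_zero hv hz ⟨1, hn⟩ ⟨0, by omega⟩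
  have hv0' : (v ⟨0, by omega⟩ : ℂ) ≠ 0 := Rat.cast_ne_zero.mpr (hv0 _)
  refine ⟨v ⟨1, hn⟩ / v ⟨0, by omega⟩, ?_⟩
  simp only [pow_one, pow_zero, one_mul, eq_ratCast] at h
  rw [Rat.cast_div, eq_div_iff hv0', h]

theorem IsNutGraph.det_adjMat_eq_zero {n : ℕ} {G : SimpleGraph (Fin n)} (hG : IsNutGraph G) :
    (adjMat G).det = 0 := by
  obtain ⟨hn, v, hv0, hv, -⟩ := hG
  exact exists_mulVec_eq_zero_iff.mp ⟨v, fun h => hv0 ⟨0, by omega⟩ (by simp [h]), hv⟩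

theorem Rat.cast_eq_one_or_eq_neg_one_of_pow_eq_one {K : Type*} [Field K] [CharZero K] {q : ℚ}
    {n : ℕ} (hn : n ≠ 0) (hq : (q : K) ^ n = 1) : (q : K) = 1 ∨ (q : K) = -1 := by
  have hq' : q ^ n = 1 := by exact_mod_cast hq
  rcases (pow_eq_one_iff_of_ne_zero hn).mp hq' with rfl | ⟨rfl, -⟩ <;> simp

/-- If `Circ(n,S)` is a nut graph, then `n` is even, `P(ω^{n/2}) = 0`,
and `P(ω^j) ≠ 0` for all `j ∈ {0,…,n−1}` with `j ≠ n/2`. -/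
theorem circulant_nut_even_and_kernel_eigenvalue
    (n : ℕ) (hn : 2 ≤ n) (S : Finset ℕ) (hS : S.Nonempty)
    (hSsub : S ⊆ Finset.Icc 1 (n / 2))
    (hnut : IsNutGraph (circ n S)) :
    Even n ∧ Pval n S (omegaC n ^ (n / 2)) = 0 ∧
      ∀ j < n, j ≠ n / 2 → Pval n S (omegaC n ^ j) ≠ 0 := by
  have hSn : S ⊆ Ioo 0 n := hSsub.trans fun s hs => by
    simp only [mem_Icc, mem_Ioo] at hs ⊢; omega
  have hω : IsPrimitiveRoot (omegaC n) n := Complex.isPrimitiveRoot_exp n (by omega)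
  have hroot : ∀ j < n, Pval n S (omegaC n ^ j) = 0 → 2 * j = n := fun j hj hP => by
    have hzn : (omegaC n ^ j) ^ n = 1 := by rw [← pow_mul, pow_mul', hω.pow_eq_one, one_pow]
    obtain ⟨q, hq⟩ := hnut.exists_eq_ratCast_of_mulVec_pow_eq_zero <| by
      rw [adjMat_circ_mulVec_pow hSn hzn, hP, zero_smul]
    rcases Rat.cast_eq_one_or_eq_neg_one_of_pow_eq_one (by omega) (hq ▸ hzn) with h1 | h1
    · obtain rfl : j = 0 := hω.pow_inj hj (by omega) (by rw [hq, h1, pow_zero])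
      exact absurd (by simpa using hP) (Pval_one_ne_zero hSn hS)
    · exact hω.two_mul_eq_of_pow_eq_neg_one (by simp) hj (hq.trans h1)
  obtain ⟨j, -, hj⟩ : ∃ j : Fin n, j ∈ univ ∧ Pval n S (omegaC n ^ (j : ℕ)) = 0 := by
    rw [← prod_eq_zero_iff, ← det_adjMat_circ hSn (by omega), ← RingHom.mapMatrix_apply,
      ← RingHom.map_det, hnut.det_adjMat_eq_zero, map_zero]
  have hjn := hroot j j.isLt hj
  refine ⟨⟨j, by omega⟩, by rwa [show n / 2 = j by omega], fun k hk hkn hP => ?_⟩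
  exact hkn (by have := hroot k hk hP; omega)
end

section
/- Let t ≥ 3 be an odd integer and let n ≥ 4t + 4 be an even integer. If either (a) t ≡ 1 (mod 10) and 5 divides n, or (b) t ≡ 15 (mod 18) and 9 divides n, then the circulant graph Circ(n, S_t) is not a nut graph. -/
open Finset Polynomial

/-!
If `M ∣ n`, the vector `k ↦ g (k mod M)` built from a pattern `g : ZMod M → ℤ` lies in the kernel
of `Circ(n, S)` as soon as `∑_{s ∈ S} (g (y + s) + g (y - s)) = 0` for every `y`: since `2s < n`
for all `s ∈ S`, the neighbours `i ± s` of a vertex `i` are pairwise distinct. For `S = S_t` and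
`∑ g = 0`, every full period of `s ↦ g (y + s) + g (y - s)` contributes `2 ∑ g = 0`, so this
condition only depends on `t mod M`. The pattern `δ₀ - δ₅` on `ℤ/10` (when `t ≡ 1 mod 10`) and
`δ₃ - δ₀` on `ℤ/9` (when `t ≡ 6 mod 9`) pass this finite check, and give kernel vectors that
vanish somewhere without vanishing identically; a nut graph has no such kernel vector.
-/

section ZModCast

variable {n : ℕ}

theorem natCast_zmod_ne_zero {a : ℕ} (ha : 0 < a) (han : a < n) : (a : ZMod n) ≠ 0 := by
  rw [Ne, ZMod.natCast_eq_zero_iff]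
  exact fun h => (Nat.le_of_dvd ha h).not_gt han

theorem natCast_zmod_inj {a b : ℕ} (ha : a < n) (hb : b < n) : (a : ZMod n) = b ↔ a = b := by
  rw [ZMod.natCast_eq_natCast_iff', Nat.mod_eq_of_lt ha, Nat.mod_eq_of_lt hb]

theorem bijective_natCast_finVal [NeZero n] :
    Function.Bijective fun k : Fin n => (k.val : ZMod n) :=
  (Fintype.bijective_iff_injective_and_card _).2
    ⟨fun a b h => Fin.ext ((natCast_zmod_inj a.2 b.2).1 h), by simp⟩

end ZModCast

section Circulant

variable {n : ℕ} {S : Finset ℕ}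

theorem circ_adj_iff (hS : ∀ s ∈ S, 0 < s ∧ 2 * s < n) (i j : Fin n) :
    (circ n S).Adj i j ↔
      ∃ s ∈ S, (j.val : ZMod n) = i.val + s ∨ (j.val : ZMod n) = i.val - s := by
  have hne : ∀ s ∈ S, (s : ZMod n) ≠ 0 := fun s hs =>
    natCast_zmod_ne_zero (hS s hs).1 (by have := hS s hs; omega)
  constructor
  · rintro ⟨-, s, hs, h | h⟩
    · exact ⟨s, hs, Or.inr (by rw [← h]; ring)⟩
    · exact ⟨s, hs, Or.inl (by rw [← h]; ring)⟩
  · rintro ⟨s, hs, h | h⟩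
    · refine ⟨?_, s, hs, Or.inr (by rw [h]; ring)⟩
      rintro rfl
      exact hne s hs (by linear_combination -h)
    · refine ⟨?_, s, hs, Or.inl (by rw [h]; ring)⟩
      rintro rfl
      exact hne s hs (by linear_combination h)

theorem adjMat_circ_mulVec_apply [NeZero n] (hS : ∀ s ∈ S, 0 < s ∧ 2 * s < n)
    (f : ZMod n → ℚ) (i : Fin n) :
    (adjMat (circ n S)).mulVec (fun k => f k.val) i =
      ∑ s ∈ S, (f (i.val + s) + f (i.val - s)) := by
  classical
  set u : ZMod n := ((i.val : ℕ) : ZMod n)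
  have hinj : Set.InjOn (fun s : ℕ => (s : ZMod n)) S := fun s hs s' hs' h =>
    (natCast_zmod_inj (by have := hS s hs; omega) (by have := hS s' hs'; omega)).1 h
  have hdisj : Disjoint (S.image fun s : ℕ => u + s) (S.image fun s : ℕ => u - s) := by
    simp only [disjoint_left, mem_image]
    rintro _ ⟨s, hs, rfl⟩ ⟨s', hs', h⟩
    have := hS s hs
    have := hS s' hs'
    exact natCast_zmod_ne_zero (n := n) (a := s + s') (by omega) (by omega)
      (by push_cast; linear_combination -h)
  have hadj : ∀ k : Fin n, (circ n S).Adj i k ↔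
      (k.val : ZMod n) ∈ (S.image fun s : ℕ => u + s) ∪ (S.image fun s : ℕ => u - s) := by
    simp only [circ_adj_iff hS, mem_union, mem_image, exists_or, and_or_left, eq_comm]
    exact fun _ => Iff.rfl
  calc (adjMat (circ n S)).mulVec (fun k => f k.val) i
      = ∑ k : Fin n, if (circ n S).Adj i k then f k.val else 0 := by
        simp [adjMat, Matrix.mulVec, dotProduct]
    _ = ∑ x : ZMod n,
          if x ∈ (S.image fun s : ℕ => u + s) ∪ (S.image fun s : ℕ => u - s) then f x else 0 :=
        Fintype.sum_bijective _ bijective_natCast_finVal _ _ fun k => by simp only [hadj]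
    _ = ∑ x ∈ (S.image fun s : ℕ => u + s) ∪ (S.image fun s : ℕ => u - s), f x := by
        rw [sum_ite_mem, univ_inter]
    _ = ∑ s ∈ S, (f (u + s) + f (u - s)) := by
        rw [sum_union hdisj, sum_image, sum_image, sum_add_distrib]
        · exact fun s hs s' hs' h => hinj hs hs' (sub_right_injective h)
        · exact fun s hs s' hs' h => hinj hs hs' (add_right_injective u h)

end Circulant

theorem adjMat_circ_mulVec_eq_zero {n M : ℕ} {S : Finset ℕ} [NeZero n] (hM : M ∣ n)
    (hS : ∀ s ∈ S, 0 < s ∧ 2 * s < n) (g : ZMod M → ℤ)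
    (hg : ∀ y, ∑ s ∈ S, (g (y + s) + g (y - s)) = 0) :
    (adjMat (circ n S)).mulVec (fun k => (g k.val : ℚ)) = 0 := by
  funext i
  have hcast : (fun k : Fin n => (g k.val : ℚ)) =
      fun k => (g (ZMod.castHom hM (ZMod M) k.val) : ℚ) := by
    simp only [map_natCast]
  rw [hcast, adjMat_circ_mulVec_apply hS fun x => (g (ZMod.castHom hM (ZMod M) x) : ℚ)]
  simp only [map_add, map_sub, map_natCast, Pi.zero_apply]
  simpa only [Int.cast_sum, Int.cast_add, Int.cast_zero] using
    congrArg (Int.cast : ℤ → ℚ) (hg ((i.val : ℕ) : ZMod M))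

theorem IsNutGraph.eq_zero_of_mulVec_eq_zero {n : ℕ} {G : SimpleGraph (Fin n)}
    (hG : IsNutGraph G) {w : Fin n → ℚ} (hw : (adjMat G).mulVec w = 0) {i : Fin n}
    (hi : w i = 0) : w = 0 := by
  obtain ⟨-, v, hv, -, hspan⟩ := hG
  obtain ⟨c, rfl⟩ := hspan w hw
  obtain rfl : c = 0 := by simpa [hv i] using hi
  exact zero_smul ℚ v

theorem not_isNutGraph_circ_of_periodic_kernel {n M : ℕ} {S : Finset ℕ} [NeZero n] [NeZero M]
    (hM : M ∣ n) (hS : ∀ s ∈ S, 0 < s ∧ 2 * s < n) (g : ZMod M → ℤ)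
    (hg : ∀ y, ∑ s ∈ S, (g (y + s) + g (y - s)) = 0) {a b : ZMod M} (ha : g a = 0)
    (hb : g b ≠ 0) : ¬ IsNutGraph (circ n S) := by
  intro hG
  have hMn : M ≤ n := Nat.le_of_dvd (Nat.pos_of_ne_zero (NeZero.ne n)) hM
  have hw := hG.eq_zero_of_mulVec_eq_zero (adjMat_circ_mulVec_eq_zero hM hS g hg)
    (i := ⟨a.val, a.val_lt.trans_le hMn⟩) (by simp [ha])
  have := congrFun hw ⟨b.val, b.val_lt.trans_le hMn⟩
  simp [hb] at this

theorem sum_add_sub_eq_two_nsmul {A R : Type*} [AddCommGroup A] [Fintype A] [AddCommMonoid R]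
    (g : A → R) (y : A) : ∑ z, (g (y + z) + g (y - z)) = 2 • ∑ z, g z := by
  rw [sum_add_distrib, two_nsmul,
    Fintype.sum_equiv (Equiv.addLeft y) (fun z => g (y + z)) g fun _ => rfl,
    Fintype.sum_equiv (Equiv.subLeft y) (fun z => g (y - z)) g fun _ => rfl]

theorem sum_range_eq_sum_range_mod {R : Type*} [AddCommMonoid R] {M : ℕ} [NeZero M]
    (G : ZMod M → R) (hG : ∑ z, G z = 0) (N : ℕ) :
    ∑ s ∈ range N, G s = ∑ s ∈ range (N % M), G s := by
  have hperiod : ∀ a : ℕ, ∑ j ∈ range M, G (a + j : ℕ) = 0 := fun a => by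
    rw [← Fin.sum_univ_eq_sum_range (fun j => G (a + j : ℕ)), ← hG,
      ← Equiv.sum_comp (Equiv.addLeft (a : ZMod M)) G]
    exact Fintype.sum_bijective _ bijective_natCast_finVal _ _ fun k => by simp
  suffices h : ∀ q, ∑ s ∈ range (N % M + M * q), G s = ∑ s ∈ range (N % M), G s by
    rw [← h (N / M), Nat.mod_add_div]
  intro q
  induction q with
  | zero => simp
  | succ q ih => rw [Nat.mul_succ, ← add_assoc, sum_range_add, ih, hperiod, add_zero]

theorem sum_St {R : Type*} [AddCommGroup R] (G : ℕ → R) {t : ℕ} (ht : 1 ≤ t) :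
    ∑ s ∈ St t, G s = ∑ s ∈ range (2 * t + 2), G s - G 0 - G t := by
  have hrange : range (2 * t + 2) = insert 0 (Icc 1 (2 * t + 1)) := by
    ext s
    simp only [mem_range, mem_insert, mem_Icc]
    omega
  rw [St, sum_erase_eq_sub (by simp only [mem_Icc]; omega), hrange,
    sum_insert (by simp)]
  abel

theorem sum_St_add_sub_eq_zero {R : Type*} [AddCommGroup R] {M : ℕ} [NeZero M]
    (g : ZMod M → R) (hg : ∑ z, g z = 0) {t : ℕ} (ht : 1 ≤ t)
    (hres : ∀ y, ∑ s ∈ range ((2 * t + 2) % M), (g (y + s) + g (y - s))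
      - (g y + g y) - (g (y + (t % M : ℕ)) + g (y - (t % M : ℕ))) = 0) (y : ZMod M) :
    ∑ s ∈ St t, (g (y + s) + g (y - s)) = 0 := by
  have hfull : ∑ z, (g (y + z) + g (y - z)) = 0 := by
    rw [sum_add_sub_eq_two_nsmul, hg, smul_zero]
  rw [sum_St (fun s => g (y + s) + g (y - s)) ht,
    sum_range_eq_sum_range_mod (fun z => g (y + z) + g (y - z)) hfull, ← ZMod.natCast_mod t M,
    ← hres y]
  simp only [Nat.cast_zero, add_zero, sub_zero]

def kernelPattern10 : ZMod 10 → ℤ := fun z => if z = 0 then 1 else if z = 5 then -1 else 0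

def kernelPattern9 : ZMod 9 → ℤ := fun z => if z = 3 then 1 else if z = 0 then -1 else 0

theorem kernelPattern10_sum_St {t : ℕ} (ht : t % 10 = 1) (y : ZMod 10) :
    ∑ s ∈ St t, (kernelPattern10 (y + s) + kernelPattern10 (y - s)) = 0 := by
  refine sum_St_add_sub_eq_zero _ (by decide) (by omega) ?_ y
  rw [show (2 * t + 2) % 10 = 4 by omega, ht]
  decide

theorem kernelPattern9_sum_St {t : ℕ} (ht : t % 9 = 6) (y : ZMod 9) :
    ∑ s ∈ St t, (kernelPattern9 (y + s) + kernelPattern9 (y - s)) = 0 := by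
  refine sum_St_add_sub_eq_zero _ (by decide) (by omega) ?_ y
  rw [show (2 * t + 2) % 9 = 5 by omega, ht]
  decide

theorem circulant_St_not_nut_general
    (t : ℕ) (n : ℕ) (hn : 4 * t + 4 ≤ n)
    (hneven : Even n)
    (hcond : (t % 10 = 1 ∧ 5 ∣ n) ∨ (t % 18 = 15 ∧ 9 ∣ n)) :
    ¬ IsNutGraph (circ n (St t)) := by
  have : NeZero n := ⟨by omega⟩
  have hS : ∀ s ∈ St t, 0 < s ∧ 2 * s < n := by
    intro s hs
    simp only [St, mem_erase, mem_Icc] at hs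
    omega
  rcases hcond with ⟨ht, h5⟩ | ⟨ht, h9⟩
  · have h10 : 10 ∣ n := Nat.Coprime.mul_dvd_of_dvd_of_dvd (by norm_num) hneven.two_dvd h5
    exact not_isNutGraph_circ_of_periodic_kernel h10 hS _ (kernelPattern10_sum_St ht)
      (a := 1) (b := 0) (by decide) (by decide)
  · exact not_isNutGraph_circ_of_periodic_kernel h9 hS _ (kernelPattern9_sum_St (by omega))
      (a := 1) (b := 0) (by decide) (by decide)

/-- Let `t ≥ 3` be odd and `n ≥ 4t+4` even. If either
`t ≡ 1 (mod 10)` and `5 ∣ n`, or `t ≡ 15 (mod 18)` and `9 ∣ n`, then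
`Circ(n, S_t)` is not a nut graph. -/
theorem circulant_St_not_nut
    (t : ℕ) (ht3 : 3 ≤ t) (htodd : Odd t) (n : ℕ) (hn : 4 * t + 4 ≤ n)
    (hneven : Even n)
    (hcond : (t % 10 = 1 ∧ 5 ∣ n) ∨ (t % 18 = 15 ∧ 9 ∣ n)) :
    ¬ IsNutGraph (circ n (St t)) :=
  circulant_St_not_nut_general t n hn hneven hcond
end

section
/- Let t ≥ 3 be an odd integer with t ≢ 1 (mod 10) and t ≢ 15 (mod 18), and let b be a positive integer that is not square-free, i.e., p² divides b for some prime p. Then the b-th cyclotomic polynomial Φ_b(y) does not divide Q_t(y) in ℤ[y]. -/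
/-!
If `p ^ 2 ∣ b` and `ζ` is a primitive `b`-th root of unity, then so is `ζ * ω ^ j` for every
power of the primitive `p`-th root of unity `ω = ζ ^ (b / p)`. Averaging the relations
`Q_t(ζ ω ^ j) = 0` against the characters of `ℤ/p` shows that, for each residue class mod `p`,
the terms of `Q_t` whose exponents lie in that class already sum to zero at `ζ`.
For `p ≥ 5` (using `t ≢ 1 mod 10` when `p = 5`) one of the exponents `0, t+1, t+2, 2t+1` is alone
in its class, which is impossible. For `p = 2` the even-exponent relation at `ζ` and `ζ⁻¹` forces
`ζ ^ 2 = 1`, against `4 ∣ b`; for `p = 3` the class relations force `ζ ^ (t + 2) = 0` or `b = 9`,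
and the latter contradicts them again or `t ≢ 15 mod 18`.
-/

open Finset Polynomial

theorem IsPrimitiveRoot.pow_eq_pow_iff_modEq {M : Type*} [CommMonoid M] {ζ : M} {k : ℕ}
    (hζ : IsPrimitiveRoot ζ k) (hk : k ≠ 0) {m n : ℕ} : ζ ^ m = ζ ^ n ↔ m ≡ n [MOD k] := by
  rw [(hζ.isOfFinOrder hk).pow_eq_pow_iff_modEq, ← hζ.eq_orderOf]

theorem sum_filter_modEq_mul_pow_eq_zero {K ι : Type*} [Field K] {p : ℕ} [NeZero (p : K)]
    {ω : K} (hω : IsPrimitiveRoot ω p) (s : Finset ι) (e : ι → ℕ) (c : ι → K) (z : K)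
    (h : ∀ j, ∑ i ∈ s, c i * (z * ω ^ j) ^ e i = 0) (r : ℕ) :
    ∑ i ∈ s with e i ≡ r [MOD p], c i * z ^ e i = 0 := by
  have hp : p ≠ 0 := fun hp => NeZero.ne (p : K) (by simp [hp])
  have hω0 : ω ≠ 0 := hω.ne_zero hp
  have character_sum : ∀ i, ∑ j ∈ range p, (ω ^ e i * (ω ^ r)⁻¹) ^ j =
      if e i ≡ r [MOD p] then (p : K) else 0 := by
    intro i
    set x := ω ^ e i * (ω ^ r)⁻¹
    have hxp : x ^ p = 1 := by
      rw [mul_pow, inv_pow, pow_right_comm, pow_right_comm ω r, hω.pow_eq_one, one_pow, one_pow,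
        inv_one, mul_one]
    have hx1 : x = 1 ↔ e i ≡ r [MOD p] := by
      rw [mul_inv_eq_one₀ (pow_ne_zero _ hω0), hω.pow_eq_pow_iff_modEq hp]
    split_ifs with hi
    · simp [hx1.mpr hi]
    · rw [geom_sum_eq (mt hx1.mp hi), hxp, sub_self, zero_div]
  have : (p : K) * ∑ i ∈ s with e i ≡ r [MOD p], c i * z ^ e i = 0 :=
    calc (p : K) * ∑ i ∈ s with e i ≡ r [MOD p], c i * z ^ e i
        = ∑ i ∈ s, c i * z ^ e i * ∑ j ∈ range p, (ω ^ e i * (ω ^ r)⁻¹) ^ j := by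
          simp only [character_sum, sum_filter, mul_sum, mul_ite, mul_zero]
          exact sum_congr rfl fun i _ => by split_ifs <;> ring
      _ = ∑ j ∈ range p, ((ω ^ r)⁻¹) ^ j * ∑ i ∈ s, c i * (z * ω ^ j) ^ e i := by
          simp only [mul_sum]
          rw [sum_comm]
          exact sum_congr rfl fun i _ => sum_congr rfl fun j _ => by ring
      _ = 0 := by simp [h]
  exact (mul_eq_zero.mp this).resolve_left (NeZero.ne _)

theorem Nat.dvd_div_sq_of_sq_dvd {b p : ℕ} (h : p ^ 2 ∣ b) : b ∣ (b / p) ^ 2 := by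
  obtain ⟨k, rfl⟩ := h
  rcases eq_or_ne p 0 with rfl | hp
  · simp
  · rw [pow_two, mul_assoc, Nat.mul_div_cancel_left _ (Nat.pos_of_ne_zero hp)]
    exact ⟨k, by ring⟩

theorem IsPrimitiveRoot.mul_pow_pow_div_of_sq_dvd {M : Type*} [CommMonoid M] {ζ : M} {b p : ℕ}
    (hζ : IsPrimitiveRoot ζ b) (h : p ^ 2 ∣ b) (j : ℕ) :
    IsPrimitiveRoot (ζ * (ζ ^ (b / p)) ^ j) b := by
  have hcop : Nat.Coprime (1 + j * (b / p)) b :=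
    (((Nat.coprime_add_mul_right_left 1 (b / p) j).mpr (Nat.coprime_one_left _)).pow_right 2)
      |>.coprime_dvd_right (Nat.dvd_div_sq_of_sq_dvd h)
  simpa [pow_add, ← pow_mul, mul_comm] using hζ.pow_of_coprime _ hcop

theorem sum_filter_modEq_eq_zero_of_cyclotomic_dvd {K ι : Type*} [Field K] [CharZero K]
    {b p : ℕ} (hb : 0 < b) (hpb : p ^ 2 ∣ b) {ζ : K} (hζ : IsPrimitiveRoot ζ b) (s : Finset ι)
    (e : ι → ℕ) (c : ι → ℤ) (hdvd : cyclotomic b ℤ ∣ ∑ i ∈ s, C (c i) * X ^ e i) (r : ℕ) :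
    ∑ i ∈ s with e i ≡ r [MOD p], (c i : K) * ζ ^ e i = 0 := by
  have hp : p ≠ 0 := by
    rintro rfl
    simp at hpb
    omega
  have : NeZero (p : K) := ⟨Nat.cast_ne_zero.mpr hp⟩
  have hω : IsPrimitiveRoot (ζ ^ (b / p)) p :=
    hζ.pow hb (Nat.div_mul_cancel ((dvd_pow_self p two_ne_zero).trans hpb)).symm
  refine sum_filter_modEq_mul_pow_eq_zero hω s e _ ζ (fun j => ?_) r
  have hroot : aeval (ζ * (ζ ^ (b / p)) ^ j) (cyclotomic b ℤ) = 0 := by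
    rw [aeval_def, eval₂_eq_eval_map, map_cyclotomic]
    exact (hζ.mul_pow_pow_div_of_sq_dvd hpb j).isRoot_cyclotomic hb
  simpa using aeval_eq_zero_of_dvd_aeval_eq_zero hdvd hroot

def qtExp {R : Type*} [Semiring R] (τ : R) : Fin 8 → R :=
  ![4 * τ + 3, 3 * τ + 2, 3 * τ + 1, 2 * τ + 2, 2 * τ + 1, τ + 2, τ + 1, 0]

def qtSign : Fin 8 → ℤ := ![1, -1, 1, -1, 1, -1, 1, -1]

theorem Qt_eq_sum (t : ℕ) : Qt t = ∑ i, C (qtSign i) * X ^ qtExp t i := by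
  simp [Qt, Fin.sum_univ_eight, qtExp, qtSign]
  ring

theorem natCast_qtExp {R : Type*} [Semiring R] (t : ℕ) (i : Fin 8) :
    ((qtExp t i : ℕ) : R) = qtExp (t : R) i := by
  fin_cases i <;> simp [qtExp]

theorem Qt_sum_filter_modEq_eq_zero {K : Type*} [Field K] [CharZero K] {t b p : ℕ} (hb : 0 < b)
    (hpb : p ^ 2 ∣ b) (hdvd : cyclotomic b ℤ ∣ Qt t) {ζ : K} (hζ : IsPrimitiveRoot ζ b) (r : ℕ) :
    ∑ i with qtExp t i ≡ r [MOD p], (qtSign i : K) * ζ ^ qtExp t i = 0 :=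
  sum_filter_modEq_eq_zero_of_cyclotomic_dvd hb hpb hζ univ _ _ (Qt_eq_sum t ▸ hdvd) r

theorem exists_forall_qtExp_ne {F : Type*} [Field F] (h2 : (2 : F) ≠ 0) (h3 : (3 : F) ≠ 0)
    (τ : F) (h5 : (5 : F) ≠ 0 ∨ 3 * τ + 2 ≠ 0) : ∃ k, ∀ i ≠ k, qtExp τ i ≠ qtExp τ k := by
  -- The exponent left alone in its class is `0`, `τ + 2`, `2τ + 1`, resp. `τ + 1`.
  by_cases hA : τ = 0
  · exact ⟨7, fun i hi => by fin_cases i <;> simp [qtExp] at hi ⊢ <;> grind⟩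
  by_cases hB : τ = -1 ∨ 2 * τ + 1 = 0
  · exact ⟨5, fun i hi => by fin_cases i <;> simp [qtExp] at hi ⊢ <;> grind⟩
  by_cases hD : 3 * τ + 2 = 0
  · exact ⟨4, fun i hi => by fin_cases i <;> simp [qtExp] at hi ⊢ <;> grind⟩
  · exact ⟨6, fun i hi => by fin_cases i <;> simp [qtExp] at hi ⊢ <;> grind⟩

theorem exists_forall_not_modEq_qtExp {t p : ℕ} (hp : p.Prime) (hp5 : 5 ≤ p)
    (ht : p = 5 → t % 5 ≠ 1) : ∃ k, ∀ i ≠ k, ¬ qtExp t i ≡ qtExp t k [MOD p] := by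
  have hsmall : ∀ n : ℕ, 0 < n → n < p → (n : ZMod p) ≠ 0 := fun n h0 hn => by
    rw [Ne, ZMod.natCast_eq_zero_iff]
    exact Nat.not_dvd_of_pos_of_lt h0 hn
  have h5 : (5 : ZMod p) ≠ 0 ∨ 3 * (t : ZMod p) + 2 ≠ 0 := by
    rcases hp5.eq_or_lt with rfl | h
    · right
      have := ht rfl
      have hr := Nat.mod_lt t (by norm_num : 5 > 0)
      rw [← ZMod.natCast_mod]
      generalize t % 5 = r at this hr ⊢
      interval_cases r <;> first | decide | exact absurd rfl this
    · exact .inl (by exact_mod_cast hsmall 5 (by norm_num) h)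
  have : Fact p.Prime := ⟨hp⟩
  obtain ⟨k, hk⟩ := exists_forall_qtExp_ne (by exact_mod_cast hsmall 2 (by norm_num) (by omega))
    (by exact_mod_cast hsmall 3 (by norm_num) (by omega)) _ h5
  refine ⟨k, fun i hi h => hk i hi ?_⟩
  rw [← natCast_qtExp, ← natCast_qtExp, ZMod.natCast_eq_natCast_iff]
  exact h

theorem cyclotomic_not_dvd_Qt_of_sq_dvd_of_five_le {t b p : ℕ} (hb : 0 < b) (hp : p.Prime)
    (hp5 : 5 ≤ p) (ht : p = 5 → t % 5 ≠ 1) (hpb : p ^ 2 ∣ b) : ¬ cyclotomic b ℤ ∣ Qt t := by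
  intro hdvd
  obtain ⟨k, hk⟩ := exists_forall_not_modEq_qtExp hp hp5 ht
  obtain ⟨ζ, hζ⟩ : ∃ ζ : ℂ, IsPrimitiveRoot ζ b := ⟨_, Complex.isPrimitiveRoot_exp b hb.ne'⟩
  have hclass := Qt_sum_filter_modEq_eq_zero hb hpb hdvd hζ (qtExp t k)
  rw [sum_filter, Fintype.sum_eq_single k fun i hi => if_neg (hk i hi),
    if_pos (Nat.ModEq.refl _)] at hclass
  have hsign : (qtSign k : ℂ) ≠ 0 := by fin_cases k <;> simp [qtSign]
  exact mul_ne_zero hsign (pow_ne_zero _ (hζ.ne_zero hb.ne')) hclass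

theorem sq_eq_one_of_Qt_even_part {K : Type*} [Field K] {ζ : K} (hζ : ζ ≠ 0) {t : ℕ}
    (h : ζ ^ (3 * t + 1) - ζ ^ (2 * t + 2) + ζ ^ (t + 1) - 1 = 0)
    (h' : ζ⁻¹ ^ (3 * t + 1) - ζ⁻¹ ^ (2 * t + 2) + ζ⁻¹ ^ (t + 1) - 1 = 0) : ζ ^ 2 = 1 := by
  have hsq : ζ ^ (2 * t + 2) = (ζ ^ (t + 1)) ^ 2 := by ring
  have hζv : ζ ^ 2 * ζ ^ (3 * t + 1) = (ζ ^ (t + 1)) ^ 3 := by ring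
  have hu : ζ ^ (t + 1) ≠ 0 := pow_ne_zero _ hζ
  have hv : ζ ^ (3 * t + 1) ≠ 0 := pow_ne_zero _ hζ
  rw [hsq] at h
  rw [inv_pow, inv_pow, inv_pow, hsq] at h'
  generalize ζ ^ (t + 1) = u at *
  generalize ζ ^ (3 * t + 1) = v at *
  have h'' : u ^ 2 - v + u * v - u ^ 2 * v = 0 := by
    field_simp at h'
    linear_combination h'
  have key : (u - 1) ^ 2 * (u ^ 2 + 1) = 0 := by linear_combination -h'' + (u - u ^ 2 - 1) * h
  rcases mul_eq_zero.mp key with h1 | h1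
  · have hu1 : u = 1 := by linear_combination (pow_eq_zero_iff two_ne_zero).mp h1
    have hv1 : v = 1 := by linear_combination h + u * hu1
    simpa [hu1, hv1] using hζv
  · have hvu : v = -u := by linear_combination h + h1
    have : u * (ζ ^ 2 - 1) = 0 := by linear_combination -hζv + ζ ^ 2 * hvu - u * h1
    exact sub_eq_zero.mp ((mul_eq_zero.mp this).resolve_left hu)

theorem cyclotomic_not_dvd_Qt_of_four_dvd {t b : ℕ} (htodd : Odd t) (hb : 0 < b) (h4 : 4 ∣ b) :
    ¬ cyclotomic b ℤ ∣ Qt t := by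
  intro hdvd
  have heven : ∀ ζ : ℂ, IsPrimitiveRoot ζ b →
      ζ ^ (3 * t + 1) - ζ ^ (2 * t + 2) + ζ ^ (t + 1) - 1 = 0 := by
    intro ζ hζ
    have h := Qt_sum_filter_modEq_eq_zero hb (p := 2) h4 hdvd hζ 0
    rw [sum_filter, Fin.sum_univ_eight] at h
    simp [qtExp, qtSign, Nat.ModEq, Nat.add_mod, Nat.mul_mod, Nat.odd_iff.mp htodd] at h
    linear_combination h
  obtain ⟨ζ, hζ⟩ : ∃ ζ : ℂ, IsPrimitiveRoot ζ b := ⟨_, Complex.isPrimitiveRoot_exp b hb.ne'⟩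
  have hζ2 := sq_eq_one_of_Qt_even_part (hζ.ne_zero hb.ne') (heven _ hζ) (heven _ hζ.inv)
  have := Nat.le_of_dvd two_pos ((hζ.pow_eq_one_iff_dvd 2).mp hζ2)
  have := Nat.le_of_dvd hb h4
  omega

theorem cyclotomic_not_dvd_Qt_of_nine_dvd_of_mod_three_eq_zero {t b : ℕ} (htodd : Odd t)
    (ht18 : t % 18 ≠ 15) (ht : t % 3 = 0) (hb : 0 < b) (h9 : 9 ∣ b) :
    ¬ cyclotomic b ℤ ∣ Qt t := by
  intro hdvd
  obtain ⟨ζ, hζ⟩ : ∃ ζ : ℂ, IsPrimitiveRoot ζ b := ⟨_, Complex.isPrimitiveRoot_exp b hb.ne'⟩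
  have h0 := Qt_sum_filter_modEq_eq_zero hb (p := 3) h9 hdvd hζ 0
  have h1 := Qt_sum_filter_modEq_eq_zero hb (p := 3) h9 hdvd hζ 1
  rw [sum_filter, Fin.sum_univ_eight] at h0 h1
  simp [qtExp, qtSign, Nat.ModEq, Nat.add_mod, Nat.mul_mod, ht] at h0 h1
  have e1 : ζ ^ (4 * t + 3) = 1 := by linear_combination h0
  have e2 : ζ ^ (3 * t) = 1 := by
    have : ζ ^ (t + 1) * (1 + ζ ^ t + (ζ ^ t) ^ 2) = 0 := by linear_combination h1
    have := (mul_eq_zero.mp this).resolve_left (pow_ne_zero _ (hζ.ne_zero hb.ne'))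
    linear_combination (ζ ^ t - 1) * this
  have d1 := (hζ.pow_eq_one_iff_dvd _).mp e1
  have := Nat.dvd_sub (d1.mul_left 3) (((hζ.pow_eq_one_iff_dvd _).mp e2).mul_left 4)
  rw [show 3 * (4 * t + 3) - 4 * (3 * t) = 9 by omega] at this
  obtain rfl := Nat.dvd_antisymm this h9
  have := Nat.odd_iff.mp htodd
  omega

theorem cyclotomic_not_dvd_Qt_of_nine_dvd_of_mod_three_eq_one {t b : ℕ} (ht : t % 3 = 1)
    (hb : 0 < b) (h9 : 9 ∣ b) : ¬ cyclotomic b ℤ ∣ Qt t := by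
  intro hdvd
  obtain ⟨ζ, hζ⟩ : ∃ ζ : ℂ, IsPrimitiveRoot ζ b := ⟨_, Complex.isPrimitiveRoot_exp b hb.ne'⟩
  have hζ0 : ζ ≠ 0 := hζ.ne_zero hb.ne'
  have h0 := Qt_sum_filter_modEq_eq_zero hb (p := 3) h9 hdvd hζ 0
  have h2 := Qt_sum_filter_modEq_eq_zero hb (p := 3) h9 hdvd hζ 2
  rw [sum_filter, Fin.sum_univ_eight] at h0 h2
  simp [qtExp, qtSign, Nat.ModEq, Nat.add_mod, Nat.mul_mod, ht] at h0 h2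
  have e1 : ζ ^ (2 * t + 1) = 1 := by
    have : ζ ^ (t + 1) * (ζ ^ (2 * t + 1) - 1) = 0 := by linear_combination -h2
    exact sub_eq_zero.mp ((mul_eq_zero.mp this).resolve_left (pow_ne_zero _ hζ0))
  exact pow_ne_zero (t + 2) hζ0 (by linear_combination -h0 + e1)

theorem cyclotomic_not_dvd_Qt_of_nine_dvd_of_mod_three_eq_two {t b : ℕ} (ht : t % 3 = 2)
    (hb : 0 < b) (h9 : 9 ∣ b) : ¬ cyclotomic b ℤ ∣ Qt t := by
  intro hdvd
  obtain ⟨ζ, hζ⟩ : ∃ ζ : ℂ, IsPrimitiveRoot ζ b := ⟨_, Complex.isPrimitiveRoot_exp b hb.ne'⟩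
  have h0 := Qt_sum_filter_modEq_eq_zero hb (p := 3) h9 hdvd hζ 0
  have h1 := Qt_sum_filter_modEq_eq_zero hb (p := 3) h9 hdvd hζ 1
  rw [sum_filter, Fin.sum_univ_eight] at h0 h1
  simp [qtExp, qtSign, Nat.ModEq, Nat.add_mod, Nat.mul_mod, ht] at h0 h1
  have e1 : ζ ^ (3 * t + 3) = -1 := by linear_combination -(ζ ^ (t + 1) + 1) * h0
  have e2 : ζ ^ (3 * t + 1) = ζ ^ (t + 2) := by linear_combination h1
  have d1 : b ∣ 6 * t + 6 :=
    (hζ.pow_eq_one_iff_dvd _).mp (by linear_combination (ζ ^ (3 * t + 3) - 1) * e1)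
  have d2 : b ∣ 2 * t - 1 := by
    have := (Nat.modEq_iff_dvd' (by omega)).mp ((hζ.pow_eq_pow_iff_modEq hb.ne').mp e2.symm)
    rwa [show 3 * t + 1 - (t + 2) = 2 * t - 1 by omega] at this
  have := Nat.dvd_sub d1 (d2.mul_left 3)
  rw [show 6 * t + 6 - 3 * (2 * t - 1) = 9 by omega] at this
  obtain rfl := Nat.dvd_antisymm this h9
  have : ζ ^ (3 * t + 3) = 1 := (hζ.pow_eq_one_iff_dvd _).mpr (by omega)
  norm_num [this] at e1

theorem cyclotomic_not_dvd_Qt_of_not_squarefree_general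
    (t : ℕ) (htodd : Odd t) (ht10 : t % 10 ≠ 1)
    (ht18 : t % 18 ≠ 15) (b : ℕ) (hb : 0 < b)
    (hsq : ∃ p : ℕ, p.Prime ∧ p ^ 2 ∣ b) :
    ¬ Polynomial.cyclotomic b ℤ ∣ Qt t := by
  obtain ⟨p, hp, hpb⟩ := hsq
  have hp4 : p ≠ 4 := by
    rintro rfl
    norm_num at hp
  have ht2 := Nat.odd_iff.mp htodd
  rcases (by have := hp.two_le; omega : p = 2 ∨ p = 3 ∨ 5 ≤ p) with rfl | rfl | hp5
  · exact cyclotomic_not_dvd_Qt_of_four_dvd htodd hb hpb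
  · rcases (by omega : t % 3 = 0 ∨ t % 3 = 1 ∨ t % 3 = 2) with ht | ht | ht
    · exact cyclotomic_not_dvd_Qt_of_nine_dvd_of_mod_three_eq_zero htodd ht18 ht hb hpb
    · exact cyclotomic_not_dvd_Qt_of_nine_dvd_of_mod_three_eq_one ht hb hpb
    · exact cyclotomic_not_dvd_Qt_of_nine_dvd_of_mod_three_eq_two ht hb hpb
  · exact cyclotomic_not_dvd_Qt_of_sq_dvd_of_five_le hb hp hp5 (fun h5 => by subst h5; omega) hpb

/-- For odd `t ≥ 3` with `t ≢ 1 (mod 10)` and `t ≢ 15 (mod 18)`,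
and every positive `b` that is not square-free, `Φ_b(y)` does not divide `Q_t(y)`. -/
theorem cyclotomic_not_dvd_Qt_of_not_squarefree
    (t : ℕ) (ht3 : 3 ≤ t) (htodd : Odd t) (ht10 : t % 10 ≠ 1)
    (ht18 : t % 18 ≠ 15) (b : ℕ) (hb : 0 < b)
    (hsq : ∃ p : ℕ, p.Prime ∧ p ^ 2 ∣ b) :
    ¬ Polynomial.cyclotomic b ℤ ∣ Qt t :=
  cyclotomic_not_dvd_Qt_of_not_squarefree_general t htodd ht10 ht18 b hb hsq
end

section
/- Let t ≥ 3 be an odd integer and let p ≥ 11 be a prime. Then neither Φ_p(y) nor Φ_{2p}(y) divides Q_t(y) in ℤ[y]. -/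
open Finset Polynomial

/-!
Modulo `p` we have `Φ_p = (X - 1)^(p-1)` and `Φ_{2p} = (X + 1)^(p-1)`. If `(X - a)^N` divides `F`,
then `θ^k F` vanishes at `a` for `k < N`, where `θ = X d/dX` is the Euler operator; since
`θ^k X^n = n^k X^n`, for `F = Q_t` this says that certain signed power sums of the exponents,
polynomials in `t`, vanish mod `p`. At `a = 1` the first and third of them force `p ∣ 12`;
at `a = -1` (where `t` odd fixes the signs) the second and fourth force `p ∣ 20`.
-/

namespace Polynomial

section EulerOperator

variable (R : Type*) [CommSemiring R]

noncomputable def eulerOp : R[X] →ₗ[R] R[X] :=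
  LinearMap.mulLeft R X ∘ₗ derivative

variable {R}

theorem eulerOp_apply (f : R[X]) : eulerOp R f = X * derivative f := rfl

theorem eulerOp_pow_X_pow (k n : ℕ) : (eulerOp R ^ k) (X ^ n) = C ((n : R) ^ k) * X ^ n := by
  induction k with
  | zero => simp
  | succ k ih =>
    rw [pow_succ', Module.End.mul_apply, ih, eulerOp_apply, derivative_C_mul_X_pow]
    rcases n with _ | n
    · simp
    · rw [pow_succ (X : R[X]) n, Nat.add_sub_cancel, pow_succ, C_mul]
      ring

theorem eulerOp_pow_one {k : ℕ} (hk : k ≠ 0) : (eulerOp R ^ k) 1 = 0 := by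
  simpa [zero_pow hk] using eulerOp_pow_X_pow (R := R) k 0

theorem pow_sub_dvd_eulerOp_pow_of_pow_dvd {f q : R[X]} {n : ℕ} (k : ℕ) (h : q ^ n ∣ f) :
    q ^ (n - k) ∣ (eulerOp R ^ k) f := by
  induction k with
  | zero => simpa using h
  | succ k ih =>
    rw [Nat.sub_succ, pow_succ', Module.End.mul_apply, eulerOp_apply]
    exact (pow_sub_one_dvd_derivative_of_pow_dvd ih).mul_left X

end EulerOperator

theorem eval_eulerOp_pow_eq_zero_of_dvd {R : Type*} [CommRing R] {f : R[X]} {a : R}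
    {n k : ℕ} (h : (X - C a) ^ n ∣ f) (hk : k < n) : ((eulerOp R ^ k) f).eval a = 0 :=
  dvd_iff_isRoot.mp <| (dvd_pow_self _ (Nat.sub_ne_zero_of_lt hk)).trans
    (pow_sub_dvd_eulerOp_pow_of_pow_dvd k h)

theorem cyclotomic_pow_dvd_map_of_cyclotomic_mul_dvd {p n : ℕ} [Fact p.Prime] (hn : ¬ p ∣ n)
    {f : ℤ[X]} (h : cyclotomic (n * p) ℤ ∣ f) :
    cyclotomic n (ZMod p) ^ (p - 1) ∣ f.map (Int.castRingHom (ZMod p)) := by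
  rw [← cyclotomic_mul_prime_eq_pow_of_not_dvd _ hn, ← map_cyclotomic _ (Int.castRingHom _)]
  exact Polynomial.map_dvd _ h

end Polynomial

theorem eval_eulerOp_pow_map_Qt {R : Type*} [CommRing R] (t : ℕ) {k : ℕ} (hk : k ≠ 0) (a : R) :
    ((eulerOp R ^ k) ((Qt t).map (Int.castRingHom R))).eval a =
      (4 * t + 3) ^ k * a ^ (4 * t + 3) - (3 * t + 2) ^ k * a ^ (3 * t + 2)
        + (3 * t + 1) ^ k * a ^ (3 * t + 1) - (2 * t + 2) ^ k * a ^ (2 * t + 2)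
        + (2 * t + 1) ^ k * a ^ (2 * t + 1) - (t + 2) ^ k * a ^ (t + 2)
        + (t + 1) ^ k * a ^ (t + 1) := by
  simp only [Qt, Polynomial.map_sub, Polynomial.map_add, Polynomial.map_pow, Polynomial.map_X,
    Polynomial.map_one, map_sub, map_add, eulerOp_pow_X_pow, eulerOp_pow_one hk, eval_sub,
    eval_add, eval_mul, eval_C, eval_pow, eval_X, sub_zero]
  push_cast
  ring

theorem cyclotomic_prime_not_dvd_Qt (t : ℕ) {p : ℕ} (hp : p.Prime) (hp5 : 5 ≤ p) :
    ¬ cyclotomic p ℤ ∣ Qt t := by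
  have : Fact p.Prime := ⟨hp⟩
  intro h
  have hdvd := cyclotomic_pow_dvd_map_of_cyclotomic_mul_dvd (n := 1) hp.not_dvd_one
    (by simpa using h)
  rw [cyclotomic_one, ← C_1] at hdvd
  have h1 := eval_eulerOp_pow_eq_zero_of_dvd hdvd (k := 1) (by omega)
  have h3 := eval_eulerOp_pow_eq_zero_of_dvd hdvd (k := 3) (by omega)
  rw [eval_eulerOp_pow_map_Qt t one_ne_zero] at h1
  rw [eval_eulerOp_pow_map_Qt t three_ne_zero] at h3
  have h12 : p ∣ 12 := (ZMod.natCast_eq_zero_iff 12 p).mp <| by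
    push_cast
    linear_combination 2 * h3 - (32 * (t : ZMod p) ^ 2 + 51 * t + 27) * h1
  have hp_le := Nat.le_of_dvd (by norm_num) h12
  interval_cases p <;> norm_num at *

theorem cyclotomic_two_mul_prime_not_dvd_Qt {t : ℕ} (ht : Odd t) {p : ℕ} (hp : p.Prime)
    (hp7 : 7 ≤ p) : ¬ cyclotomic (2 * p) ℤ ∣ Qt t := by
  have : Fact p.Prime := ⟨hp⟩
  intro h
  have hdvd := cyclotomic_pow_dvd_map_of_cyclotomic_mul_dvd (n := 2)
    (fun hp2 => by have := Nat.le_of_dvd two_pos hp2; omega) h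
  rw [cyclotomic_two, ← sub_neg_eq_add, ← C_1, ← C_neg] at hdvd
  have h2 := eval_eulerOp_pow_eq_zero_of_dvd hdvd (k := 2) (by omega)
  have h4 := eval_eulerOp_pow_eq_zero_of_dvd hdvd (k := 4) (by omega)
  have hneg : (-1 : ZMod p) ^ t = -1 := ht.neg_one_pow
  simp only [eval_eulerOp_pow_map_Qt t two_ne_zero, eval_eulerOp_pow_map_Qt t four_ne_zero,
    pow_add, pow_mul', hneg] at h2 h4
  -- `h2` gives `t² + 3t + 1 ≡ 0`, modulo which `h4` gives `18t + 7 ≡ 0`; their resultant is `5`.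
  have h20 : p ∣ 20 := (ZMod.natCast_eq_zero_iff 20 p).mp <| by
    push_cast
    linear_combination (324 + (18 * (t : ZMod p) + 47) * (-31 * t ^ 2 - 39 * t - 23)) * h2
      + (18 * (t : ZMod p) + 47) * h4
  have hp_le := Nat.le_of_dvd (by norm_num) h20
  interval_cases p <;> norm_num at *

theorem cyclotomic_p_and_2p_not_dvd_Qt_general
    (t : ℕ) (htodd : Odd t) (p : ℕ) (hp : p.Prime)
    (hp11 : 11 ≤ p) :
    ¬ Polynomial.cyclotomic p ℤ ∣ Qt t ∧
      ¬ Polynomial.cyclotomic (2 * p) ℤ ∣ Qt t :=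
  ⟨cyclotomic_prime_not_dvd_Qt t hp (by omega),
    cyclotomic_two_mul_prime_not_dvd_Qt htodd hp (by omega)⟩

/-- For odd `t ≥ 3` and a prime `p ≥ 11`, neither `Φ_p(y)` nor
`Φ_{2p}(y)` divides `Q_t(y)`. -/
theorem cyclotomic_p_and_2p_not_dvd_Qt
    (t : ℕ) (ht3 : 3 ≤ t) (htodd : Odd t) (p : ℕ) (hp : p.Prime)
    (hp11 : 11 ≤ p) :
    ¬ Polynomial.cyclotomic p ℤ ∣ Qt t ∧
      ¬ Polynomial.cyclotomic (2 * p) ℤ ∣ Qt t :=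
  cyclotomic_p_and_2p_not_dvd_Qt_general t htodd p hp hp11
end

section
/- Let t be a positive integer with t ≢ 1 (mod 10). Then for every b ∈ {3, 5, 6, 7, 10, 14, 15, 21, 30, 42}, the cyclotomic polynomial Φ_b(y) does not divide Q_t(y) in ℤ[y]. -/
/-!
Reduce modulo the prime `211 ≡ 1 (mod 210)`: its multiplicative group is cyclic of order `210`,
generated by `2`, so every `b ∣ 210` has the primitive `b`-th root of unity `2 ^ (210 / b)` in
`ZMod 211`. If `Φ_b ∣ Q_t`, this root is a root of `Q_t`. Since `Q_t(y) = qtForm (y ^ t) y`,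
the value depends only on `t mod 210`, and a finite computation shows it is never zero when
`t ≢ 1 (mod 10)` (for `b = 10` it vanishes exactly when `t ≡ 1 (mod 10)`).
-/

open Finset Polynomial

section

variable {R : Type*} [CommRing R]

def qtForm (u y : R) : R :=
  u ^ 4 * y ^ 3 - u ^ 3 * y ^ 2 + u ^ 3 * y - u ^ 2 * y ^ 2 + u ^ 2 * y - u * y ^ 2 + u * y - 1

theorem aeval_Qt (t : ℕ) (y : R) : aeval y (Qt t) = qtForm (y ^ t) y := by
  simp only [Qt, qtForm, map_sub, map_add, map_pow, map_one, aeval_X]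
  ring

theorem IsPrimitiveRoot.aeval_eq_zero_of_cyclotomic_dvd [IsDomain R] {n : ℕ} (hn : 0 < n)
    {ζ : R} (hζ : IsPrimitiveRoot ζ n) {p : ℤ[X]} (h : cyclotomic n ℤ ∣ p) : aeval ζ p = 0 :=
  aeval_eq_zero_of_dvd_aeval_eq_zero h <| by
    rw [aeval_def, eval₂_eq_eval_map, map_cyclotomic]
    exact hζ.isRoot_cyclotomic hn

end

theorem IsPrimitiveRoot.pow_div_of_dvd {M : Type*} [CommMonoid M] {ζ : M} {k d : ℕ}
    (hζ : IsPrimitiveRoot ζ k) (hk : 0 < k) (hd : d ∣ k) : IsPrimitiveRoot (ζ ^ (k / d)) d := by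
  have hquot : k / d ∣ k := Nat.div_dvd_of_dvd hd
  simpa [Nat.div_div_self hd hk.ne'] using
    hζ.pow_of_dvd (Nat.pos_of_dvd_of_pos hquot hk).ne' hquot

theorem isPrimitiveRoot_two_zmod_211 : IsPrimitiveRoot (2 : ZMod 211) 210 := by
  have hpow : ∀ l < 210, 0 < l → (2 : ZMod 211) ^ l ≠ 1 := by decide +kernel
  exact (IsPrimitiveRoot.iff (by norm_num)).2 ⟨by decide +kernel, fun l hl hl' => hpow l hl' hl⟩

theorem qtForm_zmod_211_ne_zero :
    ∀ b ∈ ({3, 5, 6, 7, 10, 14, 15, 21, 30, 42} : Finset ℕ), ∀ s < 210, s % 10 ≠ 1 →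
      qtForm (((2 : ZMod 211) ^ (210 / b)) ^ s) (2 ^ (210 / b)) ≠ 0 := by
  decide +kernel

theorem cyclotomic_small_b_not_dvd_Qt_general
    (t : ℕ) (ht10 : t % 10 ≠ 1) :
    ∀ b ∈ ({3, 5, 6, 7, 10, 14, 15, 21, 30, 42} : Finset ℕ),
      ¬ Polynomial.cyclotomic b ℤ ∣ Qt t := by
  intro b hb hdvd
  have : Fact (Nat.Prime 211) := ⟨by norm_num⟩
  have hb210 : b ∣ 210 := by fin_cases hb <;> norm_num
  have hζ : IsPrimitiveRoot ((2 : ZMod 211) ^ (210 / b)) b :=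
    isPrimitiveRoot_two_zmod_211.pow_div_of_dvd (by norm_num) hb210
  have hroot := hζ.aeval_eq_zero_of_cyclotomic_dvd (Nat.pos_of_dvd_of_pos hb210 (by norm_num)) hdvd
  rw [aeval_Qt, pow_eq_pow_mod t ((hζ.pow_eq_one_iff_dvd 210).2 hb210)] at hroot
  exact qtForm_zmod_211_ne_zero b hb (t % 210) (Nat.mod_lt _ (by norm_num)) (by omega) hroot

/-- For a positive integer `t` with `t ≢ 1 (mod 10)` and every
`b ∈ {3, 5, 6, 7, 10, 14, 15, 21, 30, 42}`, the cyclotomic polynomial `Φ_b(y)`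
does not divide `Q_t(y)`. -/
theorem cyclotomic_small_b_not_dvd_Qt
    (t : ℕ) (ht : 0 < t) (ht10 : t % 10 ≠ 1) :
    ∀ b ∈ ({3, 5, 6, 7, 10, 14, 15, 21, 30, 42} : Finset ℕ),
      ¬ Polynomial.cyclotomic b ℤ ∣ Qt t :=
  cyclotomic_small_b_not_dvd_Qt_general t ht10
end
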